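/- Let t_0 < t_1 < ... < t_k ≤ T, and let x : [t_0, T] → ℝ^n be continuous and differentiable on each open interval (t_j, t_{j+1}) for j = 0,...,k−1 and on (t_k, T), with ẋ(t) = f(x(t)) + g(x(t_j)) + h(x(t_0)) on (t_j, t_{j+1}) and ẋ(t) = f(x(t)) + g(x(t_k)) + h(x(t_0)) on (t_k, T). Set L := L_f + L_g + L_h, and let L_W > 0 and β > 0. Define ξ̄ := (1/(L_f + L_g)) log(1 + β(L_f + L_g)/(L(L_W L_h + β))). Then for every t ∈ [t_0, T] with t − t_0 ≤ ξ̄: ‖x(t) − x(t_0)‖ ≤ (β/(L_W L_h)) ‖x(t) − x̄‖. -/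
import Mathlib

open Real Set Filter Topology


lemma key_ineq (Lf Lg Lh c σ τ : ℝ) (hLf : 0 < Lf) (hLg : 0 < Lg) (hLh : 0 < Lh)
    (hc : 0 ≤ c) (hσ : 0 ≤ σ) (hτ : 0 ≤ τ) :
    ((Lf + Lg + Lh) * c / (Lf + Lg) * (Real.exp ((Lf + Lg) * σ) - 1)) * Real.exp (Lf * τ)
      + (Lg * ((Lf + Lg + Lh) * c / (Lf + Lg) * (Real.exp ((Lf + Lg) * σ) - 1))
          + (Lf + Lg + Lh) * c) / Lf * (Real.exp (Lf * τ) - 1)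
      ≤ (Lf + Lg + Lh) * c / (Lf + Lg) * (Real.exp ((Lf + Lg) * (σ + τ)) - 1) := by
  have hK : 0 < Lf + Lg := by linarith
  have hL : 0 < Lf + Lg + Lh := by linarith
  set A := Real.exp ((Lf + Lg) * σ) with hA_def
  set E := Real.exp (Lf * τ) with hE_def
  set G := Real.exp (Lg * τ) with hG_def
  have hEpos : 0 < E := Real.exp_pos _
  have hA : 1 ≤ A := Real.one_le_exp (by positivity)
  have hG : 1 + Lg * τ ≤ G := by
    have := Real.add_one_le_exp (Lg * τ); linarith
  have hEτ : E - 1 ≤ Lf * τ * E := by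
    have h1 : -(Lf * τ) + 1 ≤ Real.exp (-(Lf * τ)) := by
      have := Real.add_one_le_exp (-(Lf * τ)); linarith
    have h2 : Real.exp (-(Lf * τ)) = 1 / E := by
      rw [Real.exp_neg, one_div]
    rw [h2] at h1
    have h3 : (-(Lf * τ) + 1) * E ≤ (1 / E) * E :=
      mul_le_mul_of_nonneg_right h1 hEpos.le
    rw [one_div_mul_cancel hEpos.ne'] at h3
    nlinarith
  have hexp : Real.exp ((Lf + Lg) * (σ + τ)) = A * (E * G) := by
    rw [hA_def, hE_def, hG_def, ← Real.exp_add, ← Real.exp_add]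
    ring_nf
  have hcore : (Lf + Lg) * E ≤ Lg + Lf * (E * G) := by
    have h1 : Lf * E * (1 + Lg * τ) ≤ Lf * E * G :=
      mul_le_mul_of_nonneg_left hG (by positivity)
    nlinarith
  rw [hexp, ← sub_nonneg]
  have heq2 : (Lf + Lg + Lh) * c / (Lf + Lg) * (A * (E * G) - 1)
      - (((Lf + Lg + Lh) * c / (Lf + Lg) * (A - 1)) * E
        + (Lg * ((Lf + Lg + Lh) * c / (Lf + Lg) * (A - 1)) + (Lf + Lg + Lh) * c) / Lf
          * (E - 1))
      = ((Lf + Lg + Lh) * c * A) * (Lg + Lf * (E * G) - (Lf + Lg) * E)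
          / ((Lf + Lg) * Lf) := by
    field_simp
    ring
  rw [heq2]
  apply div_nonneg _ (by positivity)
  apply mul_nonneg (by positivity)
  linarith

lemma gronwall_step {n : ℕ} (f g h : EuclideanSpace ℝ (Fin n) → EuclideanSpace ℝ (Fin n))
    (Lf Lg Lh : ℝ) (hLf : 0 < Lf) (hLg : 0 < Lg) (hLh : 0 < Lh)
    (hf : ∀ a b, ‖f a - f b‖ ≤ Lf * ‖a - b‖)
    (hg : ∀ a b, ‖g a - g b‖ ≤ Lg * ‖a - b‖)
    (hh : ∀ a b, ‖h a - h b‖ ≤ Lh * ‖a - b‖)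
    (xb : EuclideanSpace ℝ (Fin n)) (heq : f xb + g xb + h xb = 0)
    (t0 T : ℝ) (x : ℝ → EuclideanSpace ℝ (Fin n))
    (hcont : ContinuousOn x (Set.Icc t0 T))
    (a b : ℝ) (ht0a : t0 ≤ a) (hab : a ≤ b) (hbT : b ≤ T)
    (hode : ∀ s ∈ Set.Ioo a b, HasDerivAt x (f (x s) + g (x a) + h (x t0)) s)
    (hBa : ‖x a - x t0‖ ≤ (Lf + Lg + Lh) * ‖x t0 - xb‖ / (Lf + Lg)
        * (Real.exp ((Lf + Lg) * (a - t0)) - 1)) :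
    ∀ s ∈ Set.Icc a b, ‖x s - x t0‖ ≤ (Lf + Lg + Lh) * ‖x t0 - xb‖ / (Lf + Lg)
        * (Real.exp ((Lf + Lg) * (s - t0)) - 1) := by
  rcases eq_or_lt_of_le hab with rfl | hab'
  · intro s hs
    have : s = a := le_antisymm hs.2 hs.1
    rw [this]; exact hBa
  -- continuity of f
  have hfc : Continuous f := by
    apply LipschitzWith.continuous (K := Real.toNNReal Lf)
    intro p q
    rw [edist_dist, edist_dist, dist_eq_norm, dist_eq_norm]
    rw [← ENNReal.ofReal_coe_nnreal, ← ENNReal.ofReal_mul (by positivity)]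
    apply ENNReal.ofReal_le_ofReal
    rw [Real.coe_toNNReal _ hLf.le]
    exact hf p q
  have hsub : Set.Icc a b ⊆ Set.Icc t0 T := Set.Icc_subset_Icc ht0a hbT
  have hsub' : Set.Ioo a b ⊆ Set.Icc t0 T := fun s hs => hsub ⟨hs.1.le, hs.2.le⟩
  set c := ‖x t0 - xb‖ with hc_def
  have hc : 0 ≤ c := norm_nonneg _
  set K := Lf + Lg with hK_def
  have hKpos : 0 < K := by positivity
  set w : ℝ → EuclideanSpace ℝ (Fin n) := fun s => f (x s) + g (x a) + h (x t0) with hw_def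
  set B : ℝ → ℝ := fun s => (Lf + Lg + Lh) * c / K * (Real.exp (K * (s - t0)) - 1) with hB_def
  -- derivative at the left endpoint
  have hmemIoo : Set.Ioo a b ∈ nhdsWithin a (Set.Ioi a) := Ioo_mem_nhdsGT hab'
  have hxa : ContinuousWithinAt x (Set.Ioo a b) a :=
    (hcont.continuousWithinAt (hsub ⟨le_refl a, hab⟩)).mono hsub'
  have hda : HasDerivWithinAt x (w a) (Set.Ici a) a := by
    apply hasDerivWithinAt_Ici_of_tendsto_deriv (s := Set.Ioo a b)
    · intro s hs
      exact ((hode s hs).differentiableAt).differentiableWithinAt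
    · exact hxa
    · exact hmemIoo
    · have h1 : Tendsto x (nhdsWithin a (Set.Ioi a)) (nhds (x a)) := by
        rw [← nhdsWithin_Ioo_eq_nhdsGT hab']
        exact hxa
      have h2 : Tendsto w (nhdsWithin a (Set.Ioi a)) (nhds (w a)) := by
        apply Filter.Tendsto.add_const
        apply Filter.Tendsto.add_const
        exact (hfc.continuousAt.tendsto).comp h1
      apply h2.congr'
      filter_upwards [hmemIoo] with s hs
      exact ((hode s hs).deriv).symm
  -- Grönwall
  set e : ℝ → EuclideanSpace ℝ (Fin n) := fun s => x s - x t0 with he_def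
  have hecont : ContinuousOn e (Set.Icc a b) := (hcont.mono hsub).sub continuousOn_const
  have hederiv : ∀ s ∈ Set.Ico a b, HasDerivWithinAt e (w s) (Set.Ici s) s := by
    intro s hs
    rcases eq_or_lt_of_le hs.1 with rfl | hlt
    · exact hda.sub_const _
    · exact ((hode s ⟨hlt, hs.2⟩).hasDerivWithinAt).sub_const _
  have hbound : ∀ s ∈ Set.Ico a b, ‖w s‖ ≤ Lf * ‖e s‖ + (Lg * (B a) + (Lf + Lg + Lh) * c) := by
    intro s hs
    have hsIcc : s ∈ Set.Icc t0 T := hsub ⟨hs.1, hs.2.le⟩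
    have hw0 : w s = (f (x s) - f xb) + ((g (x a) - g xb) + (h (x t0) - h xb)) := by
      rw [hw_def]
      simp only
      rw [← sub_zero (f (x s) + g (x a) + h (x t0)), ← heq]
      abel
    have h1 : ‖w s‖ ≤ Lf * ‖x s - xb‖ + (Lg * ‖x a - xb‖ + Lh * ‖x t0 - xb‖) := by
      rw [hw0]
      calc ‖(f (x s) - f xb) + ((g (x a) - g xb) + (h (x t0) - h xb))‖
          ≤ ‖f (x s) - f xb‖ + ‖(g (x a) - g xb) + (h (x t0) - h xb)‖ := norm_add_le _ _
        _ ≤ ‖f (x s) - f xb‖ + (‖g (x a) - g xb‖ + ‖h (x t0) - h xb‖) := by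
            gcongr; exact norm_add_le _ _
        _ ≤ Lf * ‖x s - xb‖ + (Lg * ‖x a - xb‖ + Lh * ‖x t0 - xb‖) := by
            gcongr <;> [exact hf _ _; exact hg _ _; exact hh _ _]
    have h2 : ‖x s - xb‖ ≤ ‖e s‖ + c := by
      have := norm_sub_le_norm_sub_add_norm_sub (x s) (x t0) xb
      simpa [he_def, hc_def] using this
    have h3 : ‖x a - xb‖ ≤ B a + c := by
      have h4 := norm_sub_le_norm_sub_add_norm_sub (x a) (x t0) xb
      have : ‖x a - x t0‖ ≤ B a := hBa
      simp only [hc_def] at *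
      linarith
    have h5 : Lf * ‖x s - xb‖ ≤ Lf * (‖e s‖ + c) := by gcongr
    have h6 : Lg * ‖x a - xb‖ ≤ Lg * (B a + c) := by gcongr
    nlinarith
  have hea : ‖e a‖ ≤ B a := by simpa [he_def] using hBa
  have hgron := norm_le_gronwallBound_of_norm_deriv_right_le hecont hederiv hea hbound
  intro s hs
  have h7 := hgron s hs
  rw [gronwallBound_of_K_ne_0 hLf.ne'] at h7
  have h8 : ‖x s - x t0‖ ≤ B a * Real.exp (Lf * (s - a))
      + (Lg * B a + (Lf + Lg + Lh) * c) / Lf * (Real.exp (Lf * (s - a)) - 1) := by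
    simpa [he_def] using h7
  have hkey := key_ineq Lf Lg Lh c (a - t0) (s - a) hLf hLg hLh hc
    (by linarith [hs.1]) (by linarith [hs.1])
  have hst : a - t0 + (s - a) = s - t0 := by ring
  rw [hst] at hkey
  calc ‖x s - x t0‖ ≤ _ := h8
    _ ≤ (Lf + Lg + Lh) * c / (Lf + Lg) * (Real.exp ((Lf + Lg) * (s - t0)) - 1) := hkey


/-- If the time since the last market clearing satisfies `t − t₀ ≤ ξ̄`, where
`ξ̄ = (1/(L_f+L_g)) log(1 + β(L_f+L_g)/(L(L_W L_h + β)))` and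
`L = L_f + L_g + L_h`, then `‖x(t) − x(t₀)‖ ≤ (β/(L_W L_h)) ‖x(t) − x̄‖`
along the piecewise dynamics. -/
theorem state_deviation_bound_outer_loop_xi
    {n : ℕ} (f g h : EuclideanSpace ℝ (Fin n) → EuclideanSpace ℝ (Fin n))
    (Lf Lg Lh : ℝ) (hLf : 0 < Lf) (hLg : 0 < Lg) (hLh : 0 < Lh)
    (hf : ∀ a b, ‖f a - f b‖ ≤ Lf * ‖a - b‖)
    (hg : ∀ a b, ‖g a - g b‖ ≤ Lg * ‖a - b‖)
    (hh : ∀ a b, ‖h a - h b‖ ≤ Lh * ‖a - b‖)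
    (xb : EuclideanSpace ℝ (Fin n)) (heq : f xb + g xb + h xb = 0)
    (k : ℕ) (t : ℕ → ℝ) (T : ℝ)
    (hmono : ∀ j < k, t j < t (j + 1)) (hkT : t k ≤ T)
    (LW β : ℝ) (hLW : 0 < LW) (hβ : 0 < β)
    (x : ℝ → EuclideanSpace ℝ (Fin n))
    (hcont : ContinuousOn x (Set.Icc (t 0) T))
    (hode : ∀ j < k, ∀ s ∈ Set.Ioo (t j) (t (j + 1)),
      HasDerivAt x (f (x s) + g (x (t j)) + h (x (t 0))) s)
    (hodeLast : ∀ s ∈ Set.Ioo (t k) T,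
      HasDerivAt x (f (x s) + g (x (t k)) + h (x (t 0))) s)
    (u : ℝ) (hu : u ∈ Set.Icc (t 0) T)
    (hξ : u - t 0 ≤ (1 / (Lf + Lg))
        * Real.log (1 + β * (Lf + Lg) / ((Lf + Lg + Lh) * (LW * Lh + β)))) :
    ‖x u - x (t 0)‖ ≤ (β / (LW * Lh)) * ‖x u - xb‖ := by
  have hKpos : 0 < Lf + Lg := by linarith
  have hLpos : 0 < Lf + Lg + Lh := by linarith
  set c := ‖x (t 0) - xb‖ with hc_def
  have hc : 0 ≤ c := norm_nonneg _
  -- monotonicity of the t sequence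
  have htmono : ∀ i j : ℕ, i ≤ j → j ≤ k → t i ≤ t j := by
    intro i j hij hjk
    induction j with
    | zero =>
      have : i = 0 := Nat.le_zero.mp hij
      rw [this]
    | succ j ih =>
      rcases Nat.lt_or_ge i (j + 1) with hlt | hge
      · have h1 : t i ≤ t j := ih (by omega) (by omega)
        have h2 : t j < t (j + 1) := hmono j (by omega)
        linarith
      · have : i = j + 1 := by omega
        rw [this]
  -- main claim up to t j
  have claim : ∀ j : ℕ, j ≤ k → ∀ s ∈ Set.Icc (t 0) (t j),
      ‖x s - x (t 0)‖ ≤ (Lf + Lg + Lh) * c / (Lf + Lg)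
        * (Real.exp ((Lf + Lg) * (s - t 0)) - 1) := by
    intro j
    induction j with
    | zero =>
      intro _ s hs
      have hs0 : s = t 0 := le_antisymm hs.2 hs.1
      rw [hs0]
      simp
    | succ j ih =>
      intro hjk s hs
      have hjk' : j ≤ k := by omega
      have hjlt : j < k := by omega
      have h0j : t 0 ≤ t j := htmono 0 j (by omega) hjk'
      have hjT : t (j + 1) ≤ T := le_trans (htmono (j + 1) k hjk (le_refl k)) hkT
      rcases le_or_gt s (t j) with hsj | hsj
      · exact ih hjk' s ⟨hs.1, hsj⟩
      · have hBa := ih hjk' (t j) ⟨h0j, le_refl _⟩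
        exact gronwall_step f g h Lf Lg Lh hLf hLg hLh hf hg hh xb heq (t 0) T x hcont
          (t j) (t (j + 1)) h0j (hmono j hjlt).le hjT (hode j hjlt) hBa s ⟨hsj.le, hs.2⟩
  have h0k : t 0 ≤ t k := htmono 0 k (Nat.zero_le k) (le_refl k)
  -- bound at u
  have hBu : ‖x u - x (t 0)‖ ≤ (Lf + Lg + Lh) * c / (Lf + Lg)
      * (Real.exp ((Lf + Lg) * (u - t 0)) - 1) := by
    rcases le_or_gt u (t k) with huk | huk
    · exact claim k (le_refl k) u ⟨hu.1, huk⟩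
    · have hBa := claim k (le_refl k) (t k) ⟨h0k, le_refl _⟩
      exact gronwall_step f g h Lf Lg Lh hLf hLg hLh hf hg hh xb heq (t 0) T x hcont
        (t k) T h0k hkT (le_refl T) hodeLast hBa u ⟨huk.le, hu.2⟩
  -- plug in the time bound
  set r := β * (Lf + Lg) / ((Lf + Lg + Lh) * (LW * Lh + β)) with hr_def
  have hWβ : 0 < LW * Lh + β := by positivity
  have hr : 0 < r := by positivity
  have hexp : Real.exp ((Lf + Lg) * (u - t 0)) ≤ 1 + r := by
    have h1 : (Lf + Lg) * (u - t 0) ≤ Real.log (1 + r) := by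
      have := mul_le_mul_of_nonneg_left hξ hKpos.le
      calc (Lf + Lg) * (u - t 0) ≤ (Lf + Lg) * ((1 / (Lf + Lg)) * Real.log (1 + r)) := this
        _ = Real.log (1 + r) := by field_simp
    calc Real.exp ((Lf + Lg) * (u - t 0)) ≤ Real.exp (Real.log (1 + r)) :=
          Real.exp_le_exp.2 h1
      _ = 1 + r := Real.exp_log (by linarith)
  have hBu2 : ‖x u - x (t 0)‖ ≤ β * c / (LW * Lh + β) := by
    have h2 : (Lf + Lg + Lh) * c / (Lf + Lg) * (Real.exp ((Lf + Lg) * (u - t 0)) - 1)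
        ≤ (Lf + Lg + Lh) * c / (Lf + Lg) * r := by
      apply mul_le_mul_of_nonneg_left (by linarith) (by positivity)
    have h3 : (Lf + Lg + Lh) * c / (Lf + Lg) * r = β * c / (LW * Lh + β) := by
      rw [hr_def]
      field_simp
    rw [h3] at h2
    linarith
  -- triangle inequality and conclusion
  have htri : c ≤ ‖x u - xb‖ + ‖x u - x (t 0)‖ := by
    have h4 : x (t 0) - xb = (x u - xb) - (x u - x (t 0)) := by abel
    rw [hc_def, h4]
    exact norm_sub_le _ _
  set m := ‖x u - x (t 0)‖
  set d := ‖x u - xb‖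
  have hm1 : m * (LW * Lh + β) ≤ β * c := by
    rw [← le_div_iff₀ hWβ] at *
    exact hBu2
  have hm2 : β * c ≤ β * d + β * m := by nlinarith
  rw [div_mul_eq_mul_div, le_div_iff₀ (by positivity)]
  nlinarith
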